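/- arXiv:2009.13941 — 8 statements merged into one kernel-verified Lean document; each statement's English description precedes it below -/
import Mathlib

section
/- Let E be a finite-dimensional real normed space, let h > 0, and let φ be a Radon measure on E such that 0 < Θ^h_*(φ,x) ≤ Θ^{h,*}(φ,x) < +∞ for φ-almost every x ∈ E. Then for every Borel set B ⊆ E and for φ-almost every x ∈ B one has Θ^h_*(φ⌞B, x) = Θ^h_*(φ, x) and Θ^{h,*}(φ⌞B, x) = Θ^{h,*}(φ, x), where φ⌞B denotes the restricted measure φ⌞B(A) := φ(A ∩ B). -/
open MeasureTheory Metric Filter Set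
open scoped ENNReal NNReal Topology

variable {E : Type*}

/-- Lower `h`-density of a measure at a point. -/
noncomputable def lowerDensity [NormedAddCommGroup E] [MeasurableSpace E]
    (φ : Measure E) (h : ℝ) (x : E) : ℝ≥0∞ :=
  liminf (fun r : ℝ => φ (closedBall x r) / ENNReal.ofReal (r ^ h)) (𝓝[>] (0 : ℝ))

/-- Upper `h`-density of a measure at a point. -/
noncomputable def upperDensity [NormedAddCommGroup E] [MeasurableSpace E]
    (φ : Measure E) (h : ℝ) (x : E) : ℝ≥0∞ :=
  limsup (fun r : ℝ => φ (closedBall x r) / ENNReal.ofReal (r ^ h)) (𝓝[>] (0 : ℝ))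

private lemma aux_liminf_const_mul {α : Type*} {f : Filter α} {u : α → ℝ≥0∞} {a : ℝ≥0∞} :
    a * f.liminf u ≤ f.liminf (fun x => a * u x) := by
  rw [liminf_eq, liminf_eq, ENNReal.mul_sSup]
  refine iSup₂_le fun b hb => le_sSup ?_
  exact hb.mono fun x hx => mul_le_mul_right hx a

theorem stmt2 [NormedAddCommGroup E] [NormedSpace ℝ E] [FiniteDimensional ℝ E]
    [MeasurableSpace E] [BorelSpace E]
    (h : ℝ) (hh : 0 < h) (φ : Measure E) [IsLocallyFiniteMeasure φ]
    (hyp : ∀ᵐ x ∂φ, 0 < lowerDensity φ h x ∧ lowerDensity φ h x ≤ upperDensity φ h x ∧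
      upperDensity φ h x < ⊤)
    (B : Set E) (hB : MeasurableSet B) :
    ∀ᵐ x ∂(φ.restrict B),
      lowerDensity (φ.restrict B) h x = lowerDensity φ h x ∧
      upperDensity (φ.restrict B) h x = upperDensity φ h x := by
  filter_upwards [Besicovitch.ae_tendsto_measure_inter_div φ B, ae_restrict_of_ae hyp]
    with x htend hx
  obtain ⟨hpos, -, -⟩ := hx
  set l : Filter ℝ := 𝓝[>] (0 : ℝ) with hl
  set F : ℝ → ℝ≥0∞ := fun r => φ (closedBall x r) / ENNReal.ofReal (r ^ h) with hFdef
  set G : ℝ → ℝ≥0∞ := fun r => φ.restrict B (closedBall x r) / ENNReal.ofReal (r ^ h) with hGdef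
  -- eventually the ball has finite measure
  obtain ⟨s, hsx, hsfin⟩ := φ.finiteAt_nhds x
  have hfin : ∀ᶠ r in l, φ (closedBall x r) ≠ ⊤ := by
    filter_upwards [nhdsWithin_le_nhds (eventually_closedBall_subset hsx)] with r hr
    exact ((measure_mono hr).trans_lt hsfin).ne
  -- eventually the ball has positive measure
  have hne0 : ∀ᶠ r in l, φ (closedBall x r) ≠ 0 := by
    have h0 : ∀ᶠ r in l, (0 : ℝ≥0∞) < F r := eventually_lt_of_lt_liminf hpos
    filter_upwards [h0] with r hr hr0
    rw [hFdef] at hr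
    simp only [hr0, ENNReal.zero_div, lt_self_iff_false] at hr
  -- G ≤ F pointwise
  have hGF : ∀ r, G r ≤ F r := fun r =>
    ENNReal.div_le_div_right (Measure.restrict_le_self _) _
  -- the key lower bound: for every a < 1, eventually a * F ≤ G
  have hratio : ∀ a : ℝ≥0∞, a < 1 → ∀ᶠ r in l, a * F r ≤ G r := by
    intro a ha
    filter_upwards [htend.eventually_const_lt ha, hfin, hne0] with r hr hrfin hr0
    have h1 : a * φ (closedBall x r) ≤ φ (B ∩ closedBall x r) :=
      (ENNReal.le_div_iff_mul_le (Or.inl hr0) (Or.inl hrfin)).mp hr.le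
    have h2 : φ.restrict B (closedBall x r) = φ (B ∩ closedBall x r) := by
      rw [Measure.restrict_apply' hB, Set.inter_comm]
    calc a * F r = a * φ (closedBall x r) / ENNReal.ofReal (r ^ h) := by
          rw [hFdef]; exact (mul_div_assoc a _ _).symm
      _ ≤ φ (B ∩ closedBall x r) / ENNReal.ofReal (r ^ h) := ENNReal.div_le_div_right h1 _
      _ = G r := by simp only [hGdef, h2]
  constructor
  · -- liminf equality
    refine le_antisymm (liminf_le_liminf (Eventually.of_forall hGF)) ?_
    refine ENNReal.le_of_forall_lt_one_mul_le fun a ha => ?_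
    calc a * liminf F l ≤ liminf (fun r => a * F r) l := aux_liminf_const_mul
      _ ≤ liminf G l := liminf_le_liminf (hratio a ha)
  · -- limsup equality
    refine le_antisymm (limsup_le_limsup (Eventually.of_forall hGF)) ?_
    refine ENNReal.le_of_forall_lt_one_mul_le fun a ha => ?_
    calc a * limsup F l = limsup (fun r => a * F r) l :=
          (ENNReal.limsup_const_mul_of_ne_top (ha.trans_le le_top).ne).symm
      _ ≤ limsup G l := limsup_le_limsup (hratio a ha)
end

section
/- Let E be a finite-dimensional real normed space, let h ≥ 1 be a natural number, let V be an h-dimensional linear subspace of E, and let ν be a Radon measure on E with support contained in V such that ν(B̄(y,r)) = r^h for every y ∈ V and every r > 0. Let φ be a Radon measure on E, x ∈ E, λ > 0, and let r_i ↓ 0 be a sequence such that ∫ f d(r_i^{-h} T_{x,r_i}φ) → λ ∫ f dν for every continuous compactly supported f : E → ℝ. Then lim_{i→∞} φ(B̄(x,r_i))/r_i^h = λ. -/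
/-!
The rescaled measures `μᵢ = rᵢ^(-h) T_{x,rᵢ} φ` converge vaguely to `λ ν`, and
`μᵢ (B̄(0,1)) = φ (B̄(x,rᵢ)) / rᵢ^h`. Squeezing the indicator of `B̄(0,1)` between continuous
compactly supported functions that are `1` on `B̄(0,s)` and vanish off `B̄(0,t)`, `s < 1 < t`,
traps the limit points of `μᵢ (B̄(0,1))` between `λ s^h` and `λ t^h`; the mass of a ball is thus
carried to the limit as soon as `s ↦ ν (B̄(0,s))` is continuous at the radius, here `s^h`.
-/

open MeasureTheory Metric Filter Set
open scoped ENNReal NNReal Topology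

variable {E : Type*}

/-- The blow-up measure `T_{x,r} φ`, with `T_{x,r} φ (A) = φ (x + r • A)`. -/
noncomputable def blowup [NormedAddCommGroup E] [NormedSpace ℝ E] [MeasurableSpace E]
    (φ : Measure E) (x : E) (r : ℝ) : Measure E :=
  Measure.map (fun y => r⁻¹ • (y - x)) φ

section BallPortmanteau

variable {X : Type*} [PseudoMetricSpace X] [ProperSpace X]

theorem exists_continuous_indicator_closedBall_le_le (c : X) {a b : ℝ} (hab : a < b) :
    ∃ f : X → ℝ, Continuous f ∧ HasCompactSupport f ∧
      (closedBall c a).indicator 1 ≤ f ∧ f ≤ (closedBall c b).indicator 1 := by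
  obtain ⟨f, hf_one, hf_zero, hf_supp, hf_mem⟩ := exists_continuous_one_zero_of_isCompact
    (isCompact_closedBall c a) isOpen_ball.isClosed_compl
    (disjoint_compl_right_iff_subset.2 (closedBall_subset_ball hab))
  refine ⟨f, f.continuous, hf_supp, fun y => ?_, fun y => ?_⟩
  · by_cases hy : y ∈ closedBall c a
    · simp [indicator_of_mem hy, hf_one hy]
    · simpa [indicator_of_notMem hy] using (hf_mem y).1
  · by_cases hy : y ∈ ball c b
    · simpa [indicator_of_mem (ball_subset_closedBall hy)] using (hf_mem y).2
    · simp [hf_zero hy, indicator_nonneg]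

variable [MeasurableSpace X] [OpensMeasurableSpace X]

theorem measureReal_closedBall_le_integral {μ : Measure X} [IsFiniteMeasureOnCompacts μ]
    {c : X} {a : ℝ} {f : X → ℝ} (hf : Continuous f) (hfs : HasCompactSupport f)
    (hle : (closedBall c a).indicator 1 ≤ f) : μ.real (closedBall c a) ≤ ∫ y, f y ∂μ := by
  rw [← integral_indicator_one measurableSet_closedBall]
  refine integral_mono ?_ (hf.integrable_of_hasCompactSupport hfs) hle
  exact (integrable_indicator_iff measurableSet_closedBall).2
    (integrableOn_const measure_closedBall_lt_top.ne)

theorem integral_le_measureReal_closedBall {μ : Measure X} [IsFiniteMeasureOnCompacts μ]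
    {c : X} {b : ℝ} {f : X → ℝ} (hf : Continuous f) (hfs : HasCompactSupport f)
    (hle : f ≤ (closedBall c b).indicator 1) : ∫ y, f y ∂μ ≤ μ.real (closedBall c b) := by
  rw [← integral_indicator_one measurableSet_closedBall]
  refine integral_mono (hf.integrable_of_hasCompactSupport hfs) ?_ hle
  exact (integrable_indicator_iff measurableSet_closedBall).2
    (integrableOn_const measure_closedBall_lt_top.ne)

theorem tendsto_measureReal_closedBall_of_tendsto_integral {ι : Type*} {l : Filter ι}
    {μ : ι → Measure X} [∀ i, IsFiniteMeasureOnCompacts (μ i)]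
    {ν : Measure X} [IsFiniteMeasureOnCompacts ν]
    (hconv : ∀ f : X → ℝ, Continuous f → HasCompactSupport f →
      Tendsto (fun i => ∫ y, f y ∂μ i) l (𝓝 (∫ y, f y ∂ν)))
    {c : X} {R : ℝ} (hν : ContinuousAt (fun s => ν.real (closedBall c s)) R) :
    Tendsto (fun i => (μ i).real (closedBall c R)) l (𝓝 (ν.real (closedBall c R))) := by
  rw [tendsto_order]
  constructor
  · intro m hm
    obtain ⟨s, hms, hsR⟩ := ((hν.eventually_const_lt hm).filter_mono nhdsWithin_le_nhds
      |>.and self_mem_nhdsWithin).exists (f := 𝓝[<] R)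
    obtain ⟨f, hf, hfs, hlo, hhi⟩ := exists_continuous_indicator_closedBall_le_le c hsR
    filter_upwards [(hconv f hf hfs).eventually_const_lt
      (hms.trans_le (measureReal_closedBall_le_integral hf hfs hlo))] with i hi
    exact hi.trans_le (integral_le_measureReal_closedBall hf hfs hhi)
  · intro m hm
    obtain ⟨s, hms, hRs⟩ := ((hν.eventually_lt_const hm).filter_mono nhdsWithin_le_nhds
      |>.and self_mem_nhdsWithin).exists (f := 𝓝[>] R)
    obtain ⟨f, hf, hfs, hlo, hhi⟩ := exists_continuous_indicator_closedBall_le_le c hRs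
    filter_upwards [(hconv f hf hfs).eventually_lt_const
      ((integral_le_measureReal_closedBall hf hfs hhi).trans_lt hms)] with i hi
    exact (measureReal_closedBall_le_integral hf hfs hlo).trans_lt hi

end BallPortmanteau

section Blowup

variable [NormedAddCommGroup E] [NormedSpace ℝ E] [MeasurableSpace E] [BorelSpace E]

theorem blowup_closedBall (φ : Measure E) (x : E) {r : ℝ} (hr : 0 < r) (s : ℝ) :
    blowup φ x r (closedBall 0 s) = φ (closedBall x (r * s)) := by
  have hpre : (fun y : E => r⁻¹ • (y - x)) ⁻¹' closedBall 0 s = closedBall x (r * s) := by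
    ext y
    simp only [mem_preimage, mem_closedBall, dist_eq_norm, sub_zero, norm_smul, norm_inv,
      Real.norm_eq_abs, abs_of_pos hr, inv_mul_le_iff₀ hr]
  rw [blowup, Measure.map_apply (by fun_prop) measurableSet_closedBall, hpre]

theorem isFiniteMeasureOnCompacts_blowup [ProperSpace E] (φ : Measure E)
    [IsFiniteMeasureOnCompacts φ] (x : E) {r : ℝ} (hr : 0 < r) :
    IsFiniteMeasureOnCompacts (blowup φ x r) := by
  refine ⟨fun K hK => ?_⟩
  obtain ⟨R, hKR⟩ := hK.isBounded.subset_closedBall 0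
  calc blowup φ x r K ≤ blowup φ x r (closedBall 0 R) := measure_mono hKR
    _ = φ (closedBall x (r * R)) := blowup_closedBall φ x hr R
    _ < ∞ := measure_closedBall_lt_top

end Blowup

theorem stmt3_general [NormedAddCommGroup E] [NormedSpace ℝ E] [FiniteDimensional ℝ E]
    [MeasurableSpace E] [BorelSpace E]
    (h : ℕ) (V : Submodule ℝ E)
    (ν : Measure E) [IsLocallyFiniteMeasure ν]
    (hν : ∀ y ∈ (V : Set E), ∀ r : ℝ, 0 < r → ν (closedBall y r) = ENNReal.ofReal (r ^ h))
    (φ : Measure E) [IsLocallyFiniteMeasure φ] (x : E) (lam : ℝ) (hlam : 0 < lam)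
    (r : ℕ → ℝ) (hrpos : ∀ i, 0 < r i)
    (hconv : ∀ f : E → ℝ, Continuous f → HasCompactSupport f →
      Tendsto (fun i => ∫ y, f y ∂((ENNReal.ofReal ((r i) ^ h))⁻¹ • blowup φ x (r i))) atTop
        (𝓝 (lam * ∫ y, f y ∂ν))) :
    Tendsto (fun i => φ (closedBall x (r i)) / ENNReal.ofReal ((r i) ^ h)) atTop
      (𝓝 (ENNReal.ofReal lam)) := by
  have : ProperSpace E := FiniteDimensional.proper ℝ E
  set μ : ℕ → Measure E := fun i => (ENNReal.ofReal ((r i) ^ h))⁻¹ • blowup φ x (r i)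
  have hμ_fin (i : ℕ) : IsFiniteMeasureOnCompacts (μ i) :=
    have := isFiniteMeasureOnCompacts_blowup φ x (hrpos i)
    .smul _ (ENNReal.inv_ne_top.2 (ENNReal.ofReal_pos.2 (pow_pos (hrpos i) h)).ne')
  have hμ_ball (i : ℕ) :
      μ i (closedBall 0 1) = φ (closedBall x (r i)) / ENNReal.ofReal ((r i) ^ h) := by
    simp [μ, blowup_closedBall φ x (hrpos i), ENNReal.div_eq_inv_mul]
  have hν_ball : ∀ s, 0 < s → (lam.toNNReal • ν).real (closedBall (0 : E) s) = lam * s ^ h := by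
    intro s hs
    rw [measureReal_def, Measure.smul_apply, hν 0 V.zero_mem s hs, ENNReal.smul_def,
      smul_eq_mul, ENNReal.toReal_mul, ENNReal.coe_toReal, Real.coe_toNNReal _ hlam.le,
      ENNReal.toReal_ofReal (pow_pos hs h).le]
  have hcont : ContinuousAt (fun s => (lam.toNNReal • ν).real (closedBall (0 : E) s)) 1 :=
    ((continuous_const.mul (continuous_pow h)).continuousAt).congr
      (eventually_gt_nhds one_pos |>.mono fun s hs => (hν_ball s hs).symm)
  have hlim := tendsto_measureReal_closedBall_of_tendsto_integral (μ := μ) (l := atTop)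
    (fun f hf hfs => by
      rw [integral_smul_nnreal_measure, NNReal.smul_def, Real.coe_toNNReal _ hlam.le]
      exact hconv f hf hfs) hcont
  rw [hν_ball 1 one_pos, one_pow, mul_one] at hlim
  convert ENNReal.tendsto_ofReal hlim using 2 with i
  rw [measureReal_def, ENNReal.ofReal_toReal measure_closedBall_lt_top.ne, hμ_ball]

theorem stmt3 [NormedAddCommGroup E] [NormedSpace ℝ E] [FiniteDimensional ℝ E]
    [MeasurableSpace E] [BorelSpace E]
    (h : ℕ) (h1 : 1 ≤ h) (V : Submodule ℝ E) (hV : Module.finrank ℝ V = h)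
    (ν : Measure E) [IsLocallyFiniteMeasure ν]
    (hsupp : ν ((V : Set E)ᶜ) = 0)
    (hν : ∀ y ∈ (V : Set E), ∀ r : ℝ, 0 < r → ν (closedBall y r) = ENNReal.ofReal (r ^ h))
    (φ : Measure E) [IsLocallyFiniteMeasure φ] (x : E) (lam : ℝ) (hlam : 0 < lam)
    (r : ℕ → ℝ) (hrpos : ∀ i, 0 < r i) (hr0 : Tendsto r atTop (𝓝 0))
    (hconv : ∀ f : E → ℝ, Continuous f → HasCompactSupport f →
      Tendsto (fun i => ∫ y, f y ∂((ENNReal.ofReal ((r i) ^ h))⁻¹ • blowup φ x (r i))) atTop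
        (𝓝 (lam * ∫ y, f y ∂ν))) :
    Tendsto (fun i => φ (closedBall x (r i)) / ENNReal.ofReal ((r i) ^ h)) atTop
      (𝓝 (ENNReal.ofReal lam)) :=
  stmt3_general h V ν hν φ x lam hlam r hrpos hconv
end

section
/- Let E be a finite-dimensional real normed space, let h, θ, γ ≥ 1 be natural numbers, and let φ be a Radon measure on E with compact support. Let x ∈ E(θ,γ), let 0 < r < 1/γ, and let 0 < δ < θ^{-1}·2^{-(4h+5)}. Suppose V is an h-dimensional linear subspace of E for which there exists Θ > 0 with F_{x,r}(φ, Θ·(μH^h⌞(x+V))) ≤ 2δ r^{h+1}. Then every w ∈ E(θ,γ) ∩ B̄(x, r/4) satisfies dist(w, x+V) ≤ 2^{1+1/(h+1)} · θ^{1/(h+1)} · δ^{1/(h+1)} · r, where x+V := {x+v : v ∈ V}. -/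
open MeasureTheory Metric Filter Set
open scoped ENNReal NNReal Topology

variable {E : Type*}

/-- The support of a measure: points all of whose neighborhoods have positive measure. -/
def msupport [NormedAddCommGroup E] [MeasurableSpace E] (φ : Measure E) : Set E :=
  {x : E | ∀ r : ℝ, 0 < r → 0 < φ (ball x r)}

/-- The set `E(θ,γ)` of points of the support where the measure of balls of radius `r < 1/γ`
is comparable to `r ^ h` with constant `θ`. -/
def Eset [NormedAddCommGroup E] [MeasurableSpace E]
    (φ : Measure E) (h θ γ : ℕ) : Set E :=
  {x : E | x ∈ msupport φ ∧ ∀ r : ℝ, 0 < r → r < 1 / γ →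
    ENNReal.ofReal (r ^ h / θ) ≤ φ (closedBall x r) ∧
    φ (closedBall x r) ≤ ENNReal.ofReal (θ * r ^ h)}

/-- The distance `F_K` between two measures: the supremum of the differences of integrals of
nonnegative `1`-Lipschitz functions vanishing outside `K`. -/
noncomputable def Fdist [NormedAddCommGroup E] [MeasurableSpace E]
    (φ ψ : Measure E) (K : Set E) : ℝ :=
  sSup {d : ℝ | ∃ f : E → ℝ, (∀ x, 0 ≤ f x) ∧ LipschitzWith 1 f ∧ (∀ x ∉ K, f x = 0) ∧
    d = |(∫ x, f x ∂φ) - ∫ x, f x ∂ψ|}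

/-!
Let `d = dist(w, x + V)` and test `F_{x,r}` with the tent `y ↦ max (d - dist w y) 0`. Since
`d ≤ r/4` it vanishes outside `B̄(x, r)`, and it vanishes on `x + V`, which carries the flat
measure; so its `φ`-integral is at most `2δ r^{h+1}`. The tent is at least `d/2` on `B̄(w, d/2)`,
a ball of `φ`-measure at least `(d/2)^h/θ` because `w ∈ E(θ,γ)`. Hence
`(d/2)^{h+1} ≤ 2θδ r^{h+1}`, and the bound follows by taking `(h+1)`-th roots.
-/

section Hausdorff

variable [NormedAddCommGroup E] [NormedSpace ℝ E] [FiniteDimensional ℝ E]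
  [MeasurableSpace E] [BorelSpace E]

lemma hausdorffMeasure_restrict_vadd_submodule_lt_top (V : Submodule ℝ E) (x : E) {K : Set E}
    (hK : IsCompact K) :
    μH[(Module.finrank ℝ V : ℝ)].restrict ((x + ·) '' (V : Set E)) K < ∞ := by
  set g : V → E := fun v => x + (v : E)
  have hg : Isometry g := (IsometryEquiv.addLeft x).isometry.comp isometry_subtype_coe
  have hrange : (x + ·) '' (V : Set E) = range g := by
    rw [show g = (x + ·) ∘ Subtype.val from rfl, range_comp, Subtype.range_coe]
  rw [Measure.restrict_apply hK.isClosed.measurableSet, hrange,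
    ← hg.hausdorffMeasure_preimage (Or.inl (Nat.cast_nonneg _))]
  exact (hg.isClosedEmbedding.isCompact_preimage hK).measure_lt_top

end Hausdorff

section Fdist

variable [NormedAddCommGroup E] [MeasurableSpace E]

/-- Boundedness of `K` and a point outside it bound the admissible functions uniformly, so the
`sSup` defining `Fdist` is not the junk value of an unbounded set. -/
lemma le_Fdist {φ ψ : Measure E} {K : Set E} (hK : Bornology.IsBounded K) (hKc : Kᶜ.Nonempty)
    (hφ : φ K ≠ ∞) (hψ : ψ K ≠ ∞) {f : E → ℝ} (hf0 : ∀ y, 0 ≤ f y) (hf : LipschitzWith 1 f)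
    (hfK : ∀ y ∉ K, f y = 0) :
    |(∫ y, f y ∂φ) - ∫ y, f y ∂ψ| ≤ Fdist φ ψ K := by
  obtain ⟨z, hz⟩ := hKc
  obtain ⟨R, -, hKR⟩ := hK.subset_closedBall_lt 0 z
  have hgR : ∀ g : E → ℝ, LipschitzWith 1 g → (∀ y ∉ K, g y = 0) → ∀ y ∈ K, ‖g y‖ ≤ R :=
    fun g hg hgK y hy => by
      simpa [hgK z hz, Real.dist_eq] using (hg.dist_le_mul y z).trans (by simpa using hKR hy)
  have hint : ∀ (μ : Measure E), μ K ≠ ∞ → ∀ g : E → ℝ, LipschitzWith 1 g →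
      (∀ y ∉ K, g y = 0) → |∫ y, g y ∂μ| ≤ R * μ.real K := fun μ hμ g hg hgK => by
    rw [← setIntegral_eq_integral_of_forall_compl_eq_zero hgK]
    exact norm_setIntegral_le_of_norm_le_const hμ.lt_top (hgR g hg hgK)
  refine le_csSup ⟨R * φ.real K + R * ψ.real K, ?_⟩ ⟨f, hf0, hf, hfK, rfl⟩
  rintro _ ⟨g, -, hg, hgK, rfl⟩
  exact (abs_sub _ _).trans (add_le_add (hint φ hφ g hg hgK) (hint ψ hψ g hg hgK))

end Fdist

lemma le_rpow_one_div_mul_of_pow_le {a c r : ℝ} {n : ℕ} (hn : n ≠ 0) (hc : 0 ≤ c) (hr : 0 ≤ r)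
    (h : a ^ n ≤ c * r ^ n) : a ≤ c ^ (1 / (n : ℝ)) * r := by
  refine le_of_pow_le_pow_left₀ hn (by positivity) ?_
  rwa [mul_pow, one_div, Real.rpow_inv_natCast_pow hc hn]

lemma le_mul_rpow_of_half_pow_div_le {d θ δ r : ℝ} {h : ℕ} (hθ : 0 < θ) (hδ : 0 ≤ δ) (hr : 0 ≤ r)
    (H : (d / 2) ^ (h + 1) / θ ≤ 2 * δ * r ^ (h + 1)) :
    d ≤ 2 ^ (1 + 1 / ((h : ℝ) + 1)) * θ ^ (1 / ((h : ℝ) + 1)) * δ ^ (1 / ((h : ℝ) + 1)) * r := by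
  rw [div_le_iff₀ hθ] at H
  have hroot := le_rpow_one_div_mul_of_pow_le h.succ_ne_zero (by positivity) hr
    (H.trans_eq (by ring) : (d / 2) ^ (h + 1) ≤ 2 * θ * δ * r ^ (h + 1))
  push_cast at hroot
  calc d ≤ 2 * ((2 * θ * δ) ^ (1 / ((h : ℝ) + 1)) * r) := by linarith
    _ = _ := by
      rw [Real.mul_rpow (by positivity) hδ, Real.mul_rpow zero_le_two hθ.le,
        Real.rpow_add two_pos, Real.rpow_one]
      ring

section Tent

variable {X : Type*} [PseudoMetricSpace X]

def tent (w : X) (d : ℝ) (y : X) : ℝ := max (d - dist w y) 0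

lemma tent_nonneg (w : X) (d : ℝ) (y : X) : 0 ≤ tent w d y := le_max_right _ _

lemma tent_eq_zero_of_le_dist {w y : X} {d : ℝ} (h : d ≤ dist w y) : tent w d y = 0 :=
  max_eq_right (sub_nonpos.2 h)

lemma lipschitzWith_tent (w : X) (d : ℝ) : LipschitzWith 1 (tent w d) := by
  show LipschitzWith 1 fun y => max (d - dist w y) 0
  simpa using ((LipschitzWith.const d).sub (LipschitzWith.dist_right w)).max_const 0

lemma hasCompactSupport_tent [ProperSpace X] (w : X) (d : ℝ) : HasCompactSupport (tent w d) :=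
  HasCompactSupport.intro (isCompact_closedBall w d) fun y hy =>
    tent_eq_zero_of_le_dist (by rw [dist_comm]; exact (not_le.1 hy).le)

lemma half_mul_measureReal_le_integral_tent [ProperSpace X] [MeasurableSpace X]
    [OpensMeasurableSpace X] (μ : Measure X) [IsFiniteMeasureOnCompacts μ] (w : X) (d : ℝ) :
    d / 2 * μ.real (closedBall w (d / 2)) ≤ ∫ y, tent w d y ∂μ := by
  have hint : Integrable (tent w d) μ :=
    (lipschitzWith_tent w d).continuous.integrable_of_hasCompactSupport (hasCompactSupport_tent w d)
  calc d / 2 * μ.real (closedBall w (d / 2)) = ∫ _ in closedBall w (d / 2), d / 2 ∂μ := by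
        rw [setIntegral_const, smul_eq_mul, mul_comm]
    _ ≤ ∫ y in closedBall w (d / 2), tent w d y ∂μ := by
        refine setIntegral_mono_on (integrableOn_const measure_closedBall_lt_top.ne)
          hint.integrableOn measurableSet_closedBall fun y hy => ?_
        rw [mem_closedBall, dist_comm] at hy
        exact le_max_of_le_left (by linarith)
    _ ≤ ∫ y, tent w d y ∂μ := setIntegral_le_integral hint (.of_forall (tent_nonneg w d))

end Tent

lemma div_le_measureReal_closedBall_of_mem_Eset [NormedAddCommGroup E] [MeasurableSpace E]
    {φ : Measure E} {h θ γ : ℕ} {w : E} (hw : w ∈ Eset φ h θ γ) {ρ : ℝ} (hρ : 0 < ρ)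
    (hργ : ρ < 1 / γ) : ρ ^ h / θ ≤ φ.real (closedBall w ρ) := by
  obtain ⟨hlow, hup⟩ := hw.2 ρ hρ hργ
  exact (ENNReal.ofReal_le_iff_le_toReal (hup.trans_lt ENNReal.ofReal_lt_top).ne).1 hlow

section TentIntegral

variable [NormedAddCommGroup E] [ProperSpace E] [MeasurableSpace E] [BorelSpace E]
  {φ : Measure E} [IsLocallyFiniteMeasure φ] {w : E} {d : ℝ}

lemma half_pow_succ_div_le_integral_tent {h θ γ : ℕ} (hw : w ∈ Eset φ h θ γ) (hd : 0 < d)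
    (hdγ : d / 2 < 1 / γ) : (d / 2) ^ (h + 1) / θ ≤ ∫ y, tent w d y ∂φ :=
  calc (d / 2) ^ (h + 1) / θ = d / 2 * ((d / 2) ^ h / θ) := by ring
    _ ≤ d / 2 * φ.real (closedBall w (d / 2)) := by
      gcongr
      exact div_le_measureReal_closedBall_of_mem_Eset hw (by linarith) hdγ
    _ ≤ ∫ y, tent w d y ∂φ := half_mul_measureReal_le_integral_tent φ w d

lemma integral_tent_le_Fdist [NormedSpace ℝ E] [Nontrivial E] {μ : Measure E} {S : Set E}
    {c : ℝ≥0∞} {x : E} {r : ℝ} (hμ : (c • μ.restrict S) (closedBall x r) ≠ ∞)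
    (hdS : ∀ y ∈ S, d ≤ dist w y) (hdx : d + dist x w ≤ r) :
    ∫ y, tent w d y ∂φ ≤ Fdist φ (c • μ.restrict S) (closedBall x r) := by
  obtain ⟨v, hv⟩ := NormedSpace.exists_lt_norm ℝ E r
  have hK : ∀ y ∉ closedBall x r, tent w d y = 0 := fun y hy => by
    rw [mem_closedBall', not_le] at hy
    exact tent_eq_zero_of_le_dist (by linarith [dist_triangle x w y])
  have hS : ∫ y, tent w d y ∂(c • μ.restrict S) = 0 := by
    rw [integral_smul_measure, setIntegral_eq_zero_of_forall_eq_zero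
      fun y hy => tent_eq_zero_of_le_dist (hdS y hy), smul_zero]
  have := le_Fdist isBounded_closedBall ⟨x + v, by simpa using hv⟩
    (measure_closedBall_lt_top (μ := φ)).ne hμ (tent_nonneg w d) (lipschitzWith_tent w d) hK
  rwa [hS, sub_zero, abs_of_nonneg (integral_nonneg (tent_nonneg w d))] at this

end TentIntegral

theorem stmt5_general [NormedAddCommGroup E] [NormedSpace ℝ E] [FiniteDimensional ℝ E]
    [MeasurableSpace E] [BorelSpace E]
    (h θ γ : ℕ) (h1 : 1 ≤ h) (hθ : 1 ≤ θ)
    (φ : Measure E) [IsLocallyFiniteMeasure φ]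
    (x : E) (r : ℝ) (hr0 : 0 < r) (hrγ : r < 1 / γ)
    (δ : ℝ) (hδ0 : 0 < δ)
    (V : Submodule ℝ E) (hV : Module.finrank ℝ V = h)
    (Θ : ℝ)
    (hF : Fdist φ (ENNReal.ofReal Θ • (μH[(h : ℝ)].restrict ((x + ·) '' (V : Set E))))
        (closedBall x r) ≤ 2 * δ * r ^ (h + 1)) :
    ∀ w ∈ Eset φ h θ γ ∩ closedBall x (r / 4),
      infDist w ((x + ·) '' (V : Set E)) ≤
        (2 : ℝ) ^ ((1 : ℝ) + 1 / ((h : ℝ) + 1)) * (θ : ℝ) ^ ((1 : ℝ) / ((h : ℝ) + 1)) *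
          δ ^ ((1 : ℝ) / ((h : ℝ) + 1)) * r := by
  rintro w ⟨hw, hwx⟩
  set S := (x + ·) '' (V : Set E)
  set d := infDist w S
  rw [mem_closedBall] at hwx
  have hdr : d ≤ r / 4 :=
    (infDist_le_dist_of_mem (show x ∈ S from ⟨0, V.zero_mem, add_zero x⟩)).trans hwx
  rcases (infDist_nonneg : 0 ≤ d).eq_or_lt with hd | hd
  · rw [show d = 0 from hd.symm]; positivity
  have : Nontrivial E :=
    Module.nontrivial_of_finrank_pos (R := ℝ) (by have := V.finrank_le; omega)
  have hψ : (ENNReal.ofReal Θ • μH[(h : ℝ)].restrict S) (closedBall x r) ≠ ∞ := by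
    rw [Measure.smul_apply, smul_eq_mul, ← hV]
    exact ENNReal.mul_ne_top ENNReal.ofReal_ne_top
      (hausdorffMeasure_restrict_vadd_submodule_lt_top V x (isCompact_closedBall x r)).ne
  refine le_mul_rpow_of_half_pow_div_le (by exact_mod_cast hθ) hδ0.le hr0.le ?_
  calc (d / 2) ^ (h + 1) / θ ≤ ∫ y, tent w d y ∂φ :=
        half_pow_succ_div_le_integral_tent hw hd (by linarith)
    _ ≤ _ := integral_tent_le_Fdist hψ (fun y hy => infDist_le_dist_of_mem hy)
          (by rw [dist_comm]; linarith)
    _ ≤ 2 * δ * r ^ (h + 1) := hF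

theorem stmt5 [NormedAddCommGroup E] [NormedSpace ℝ E] [FiniteDimensional ℝ E]
    [MeasurableSpace E] [BorelSpace E]
    (h θ γ : ℕ) (h1 : 1 ≤ h) (hθ : 1 ≤ θ) (hγ : 1 ≤ γ)
    (φ : Measure E) [IsLocallyFiniteMeasure φ]
    (hcpt : ∃ K : Set E, IsCompact K ∧ φ Kᶜ = 0)
    (x : E) (hx : x ∈ Eset φ h θ γ) (r : ℝ) (hr0 : 0 < r) (hrγ : r < 1 / γ)
    (δ : ℝ) (hδ0 : 0 < δ) (hδ : δ < ((θ : ℝ) * 2 ^ (4 * h + 5))⁻¹)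
    (V : Submodule ℝ E) (hV : Module.finrank ℝ V = h)
    (Θ : ℝ) (hΘ : 0 < Θ)
    (hF : Fdist φ (ENNReal.ofReal Θ • (μH[(h : ℝ)].restrict ((x + ·) '' (V : Set E))))
        (closedBall x r) ≤ 2 * δ * r ^ (h + 1)) :
    ∀ w ∈ Eset φ h θ γ ∩ closedBall x (r / 4),
      infDist w ((x + ·) '' (V : Set E)) ≤
        (2 : ℝ) ^ ((1 : ℝ) + 1 / ((h : ℝ) + 1)) * (θ : ℝ) ^ ((1 : ℝ) / ((h : ℝ) + 1)) *
          δ ^ ((1 : ℝ) / ((h : ℝ) + 1)) * r :=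
  stmt5_general h θ γ h1 hθ φ x r hr0 hrγ δ hδ0 V hV Θ hF
end

section
/- Let E be a finite-dimensional real normed space and let F ⊆ E be a closed set for which there exist a countable family {V_i}_{i∈ℕ} of linear subspaces of E and numbers α_i ∈ (0,1) such that for every x ∈ F there exist ρ(x) > 0 and an index i(x) with F ∩ B̄(x,r) ⊆ x + C_{V_{i(x)}}(α_{i(x)}) whenever 0 < r < ρ(x). Then there exist countably many compact sets Γ_j ⊆ E, indices i_j ∈ ℕ, and real numbers β_j with α_{i_j} < β_j < 2α_{i_j}, such that each Γ_j is a C_{V_{i_j}}(3β_j)-set and F = ⋃_{j∈ℕ} Γ_j. -/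
set_option maxHeartbeats 1000000


open Metric Set

variable {E : Type*}

/-- The cone `C_V(α)` of all points whose distance from `V` is at most `α` times their norm. -/
def cone [NormedAddCommGroup E] [NormedSpace ℝ E] (V : Submodule ℝ E) (α : ℝ) : Set E :=
  {w : E | infDist w (V : Set E) ≤ α * ‖w‖}

/-- A `C_V(α)`-set: all differences of pairs of points of `Γ` lie in the cone `C_V(α)`. -/
def IsConeSet [NormedAddCommGroup E] [NormedSpace ℝ E]
    (V : Submodule ℝ E) (α : ℝ) (Γ : Set E) : Prop :=
  ∀ p ∈ Γ, ∀ q ∈ Γ, q - p ∈ cone V α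

lemma cone_isClosed [NormedAddCommGroup E] [NormedSpace ℝ E] (V : Submodule ℝ E) (α : ℝ) :
    IsClosed (cone V α) := by
  have h : cone V α = {w : E | infDist w (V : Set E) - α * ‖w‖ ≤ 0} := by
    ext w; simp [cone, sub_nonpos]
  rw [h]
  exact isClosed_le ((continuous_infDist_pt _).sub (continuous_const.mul continuous_norm))
    continuous_const

lemma cone_mono [NormedAddCommGroup E] [NormedSpace ℝ E] (V : Submodule ℝ E) {a b : ℝ}
    (hab : a ≤ b) : cone V a ⊆ cone V b := by
  intro w hw
  exact hw.trans (mul_le_mul_of_nonneg_right hab (norm_nonneg w))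

theorem stmt8 [NormedAddCommGroup E] [NormedSpace ℝ E] [FiniteDimensional ℝ E]
    (F : Set E) (hF : IsClosed F)
    (V : ℕ → Submodule ℝ E) (α : ℕ → ℝ) (hα : ∀ i, α i ∈ Set.Ioo (0 : ℝ) 1)
    (hyp : ∀ x ∈ F, ∃ ρ : ℝ, 0 < ρ ∧ ∃ i : ℕ, ∀ r : ℝ, 0 < r → r < ρ →
      F ∩ closedBall x r ⊆ (x + ·) '' cone (V i) (α i)) :
    ∃ (Γ : ℕ → Set E) (idx : ℕ → ℕ) (β : ℕ → ℝ),
      (∀ j, IsCompact (Γ j) ∧ α (idx j) < β j ∧ β j < 2 * α (idx j) ∧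
        IsConeSet (V (idx j)) (3 * β j) (Γ j)) ∧
      F = ⋃ j, Γ j := by
  haveI : Nonempty E := ⟨0⟩
  obtain ⟨d, hd⟩ := TopologicalSpace.exists_dense_seq E
  set r : ℕ → ℝ := fun n => 1 / (n + 1) with hr
  have hrpos : ∀ n, 0 < r n := fun n => by positivity
  set Fs : ℕ → ℕ → Set E := fun i n =>
    {x ∈ F | ∀ s : ℝ, 0 < s → s < r n → F ∩ closedBall x s ⊆ (x + ·) '' cone (V i) (α i)}
    with hFs
  set S : ℕ × ℕ × ℕ → Set E := fun p =>
    Fs p.1 p.2.1 ∩ closedBall (d p.2.2) (r p.2.1 / 4) with hS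
  have e : ℕ ≃ ℕ × ℕ × ℕ := (Denumerable.eqv (ℕ × ℕ × ℕ)).symm
  refine ⟨fun j => closure (S (e j)), fun j => (e j).1, fun j => 3 / 2 * α (e j).1, ?_, ?_⟩
  · intro j
    obtain ⟨⟨i, n, m⟩, hej⟩ : ∃ p, e j = p := ⟨e j, rfl⟩
    simp only [hej]
    have hαi := hα i
    refine ⟨?_, by linarith [hαi.1], by linarith [hαi.1], ?_⟩
    · exact (isBounded_closedBall.subset inter_subset_right).isCompact_closure
    · -- cone-set property
      have key : ∀ p ∈ S (i, n, m), ∀ q ∈ S (i, n, m), q - p ∈ cone (V i) (α i) := by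
        intro p hp q hq
        rcases eq_or_ne q p with h | h
        · have : q - p = 0 := by rw [h, sub_self]
          rw [this]
          simp [cone, infDist_zero_of_mem (V i).zero_mem]
        · have hpos : 0 < ‖q - p‖ := by
            rw [norm_pos_iff]; exact sub_ne_zero_of_ne h
          have hlt : ‖q - p‖ < r n := by
            have h1 : dist q p ≤ dist q (d m) + dist (d m) p := dist_triangle _ _ _
            have h2 : dist q (d m) ≤ r n / 4 := hq.2
            have h3 : dist (d m) p ≤ r n / 4 := by
              rw [dist_comm]; exact hp.2
            have := hrpos n
            calc ‖q - p‖ = dist q p := (dist_eq_norm q p).symm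
              _ ≤ r n / 4 + r n / 4 := by linarith
              _ < r n := by linarith
          have hq' : q ∈ F ∩ closedBall p ‖q - p‖ := by
            refine ⟨hq.1.1, ?_⟩
            simp [mem_closedBall, dist_eq_norm]
          obtain ⟨w, hw, hw'⟩ := hp.1.2 ‖q - p‖ hpos hlt hq'
          have hwq : w = q - p := eq_sub_of_add_eq' hw'
          rwa [← hwq]
      intro p hp q hq
      have hcl : closure (S (i, n, m)) ×ˢ closure (S (i, n, m)) ⊆
          (fun pq : E × E => pq.2 - pq.1) ⁻¹' cone (V i) (α i) := by
        rw [← closure_prod_eq]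
        refine closure_minimal ?_
          ((cone_isClosed (V i) (α i)).preimage (continuous_snd.sub continuous_fst))
        intro pq hpq
        exact key pq.1 hpq.1 pq.2 hpq.2
      have hmem : q - p ∈ cone (V i) (α i) := hcl (Set.mk_mem_prod hp hq)
      exact cone_mono (V i) (by linarith [hαi.1]) hmem
  · refine Set.Subset.antisymm (fun x hx => ?_) ?_
    ·
      obtain ⟨ρ, hρ, i, hi⟩ := hyp x hx
      obtain ⟨n, hn⟩ := exists_nat_one_div_lt hρ
      obtain ⟨m, hm⟩ := hd.exists_dist_lt x (by positivity : (0:ℝ) < r n / 4)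
      have hxS : x ∈ S (i, n, m) := by
        refine ⟨⟨hx, fun s hs hs' => hi s hs (hs'.trans hn)⟩, ?_⟩
        exact mem_closedBall.mpr hm.le
      have : x ∈ closure (S (e (e.symm (i, n, m)))) := by
        rw [Equiv.apply_symm_apply]
        exact subset_closure hxS
      exact mem_iUnion.mpr ⟨e.symm (i, n, m), this⟩
    · refine iUnion_subset fun j => ?_
      have : S (e j) ⊆ F := fun x hx => hx.1.1
      calc closure (S (e j)) ⊆ closure F := closure_mono this
        _ = F := hF.closure_eq
end

section
/- Let E be a finite-dimensional real normed space and let V₁, V₂ be h-dimensional linear subspaces of E. For any ε > 0 and α > 0, if the Hausdorff distance satisfies d_H(V₁ ∩ B̄(0,1), V₂ ∩ B̄(0,1)) < ε/4, then C_{V₁}(α) ⊆ C_{V₂}(α + ε). -/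
open Metric Set

variable {E : Type*}

theorem stmt10 [NormedAddCommGroup E] [NormedSpace ℝ E] [FiniteDimensional ℝ E]
    (h : ℕ) (V₁ V₂ : Submodule ℝ E)
    (hd1 : Module.finrank ℝ V₁ = h) (hd2 : Module.finrank ℝ V₂ = h)
    (ε α : ℝ) (hε : 0 < ε) (hα : 0 < α)
    (hdist : hausdorffDist ((V₁ : Set E) ∩ closedBall 0 1) ((V₂ : Set E) ∩ closedBall 0 1)
      < ε / 4) :
    cone V₁ α ⊆ cone V₂ (α + ε) := by
  intro w hw
  have h0 : (0 : E) ∈ (V₂ : Set E) := V₂.zero_mem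
  simp only [cone, mem_setOf_eq] at hw ⊢
  rcases le_or_gt 1 α with h1 | h1
  · calc infDist w (V₂ : Set E) ≤ dist w 0 := infDist_le_dist_of_mem h0
      _ = ‖w‖ := by simp
      _ ≤ (α + ε) * ‖w‖ := by nlinarith [norm_nonneg w]
  rcases eq_or_ne w 0 with rfl | hw0
  · have := infDist_le_dist_of_mem (x := (0 : E)) h0
    simpa using this
  have hw0' : 0 < ‖w‖ := norm_pos_iff.mpr hw0
  obtain ⟨v, hvV, hvd⟩ :=
    (Submodule.closed_of_finiteDimensional V₁).exists_infDist_eq_dist ⟨0, V₁.zero_mem⟩ w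
  have hvd' : dist w v ≤ α * ‖w‖ := hvd ▸ hw
  set r : ℝ := (1 + α) * ‖w‖ with hr
  have hrpos : 0 < r := by positivity
  have hvnorm : ‖v‖ ≤ r := by
    have : ‖v‖ ≤ ‖v - w‖ + ‖w‖ := by
      simpa using norm_add_le (v - w) w
    have hdvw : ‖v - w‖ = dist w v := by rw [dist_comm, dist_eq_norm]
    nlinarith
  set x : E := r⁻¹ • v with hx
  have hxV : x ∈ (V₁ : Set E) := V₁.smul_mem _ hvV
  have hxball : x ∈ closedBall (0 : E) 1 := by
    rw [mem_closedBall_zero_iff, hx, norm_smul, norm_inv, Real.norm_of_nonneg hrpos.le]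
    rw [inv_mul_le_iff₀ hrpos, mul_one]
    exact hvnorm
  have hne1 : ((V₁ : Set E) ∩ closedBall 0 1).Nonempty :=
    ⟨0, V₁.zero_mem, mem_closedBall_self zero_le_one⟩
  have hne2 : ((V₂ : Set E) ∩ closedBall 0 1).Nonempty :=
    ⟨0, V₂.zero_mem, mem_closedBall_self zero_le_one⟩
  have hbdd1 : Bornology.IsBounded ((V₁ : Set E) ∩ closedBall 0 1) :=
    (isBounded_closedBall).subset inter_subset_right
  have hbdd2 : Bornology.IsBounded ((V₂ : Set E) ∩ closedBall 0 1) :=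
    (isBounded_closedBall).subset inter_subset_right
  have hfin := hausdorffEdist_ne_top_of_nonempty_of_bounded hne1 hne2 hbdd1 hbdd2
  obtain ⟨u, hu, hud⟩ := exists_dist_lt_of_hausdorffDist_lt (Set.mem_inter hxV hxball) hdist hfin
  have huV : r • u ∈ (V₂ : Set E) := V₂.smul_mem _ hu.1
  have hrx : r • x = v := by rw [hx, smul_inv_smul₀ hrpos.ne']
  have hdvu : dist v (r • u) ≤ r * (ε / 4) := by
    rw [← hrx, dist_smul₀, Real.norm_of_nonneg hrpos.le]
    exact mul_le_mul_of_nonneg_left hud.le hrpos.le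
  calc infDist w (V₂ : Set E) ≤ dist w (r • u) := infDist_le_dist_of_mem huV
    _ ≤ dist w v + dist v (r • u) := dist_triangle _ _ _
    _ ≤ α * ‖w‖ + r * (ε / 4) := add_le_add hvd' hdvu
    _ ≤ (α + ε) * ‖w‖ := by rw [hr]; nlinarith [mul_pos hw0' hε]
  done
end

section
/- Let E be a finite-dimensional real normed space, let V and L be complementary linear subspaces of E, and suppose C > 0 satisfies C‖P_L g‖ ≤ dist(g, V) for every g ∈ E. For 0 < α < C/2 set c(α) := α/(C − α). Then B̄(0,1) ∩ V ⊆ P_V(B̄(0,1) ∩ C_V(α)) ⊆ B̄(0, 1/(1 − c(α))) ∩ V. -/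
open Metric Set

variable {E : Type*}

/-- The projection onto `P` along the complementary subspace `Q`, viewed as a map `E → E`. -/
noncomputable def splitProj [NormedAddCommGroup E] [NormedSpace ℝ E]
    (P Q : Submodule ℝ E) (hc : IsCompl P Q) (g : E) : E :=
  (P.linearProjOfIsCompl Q hc g : E)

/-!
Every `v ∈ V` lies in the cone and is its own projection, which gives the first inclusion.
For the second, write `g = v + l` with `v = P_V g`, `l = P_L g` and `g` in the cone. Then
`C‖l‖ ≤ dist(g, V) ≤ α‖g‖ ≤ α(‖v‖ + ‖l‖)`, so `‖l‖ ≤ c(α)‖v‖`, and hence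
`‖v‖ ≤ ‖g‖ + ‖l‖ ≤ 1 + c(α)‖v‖`; since `α < C/2` means `c(α) < 1`, this bounds `‖v‖`.
-/

section Projection

variable [NormedAddCommGroup E] [NormedSpace ℝ E]

theorem splitProj_of_mem {P Q : Submodule ℝ E} (hc : IsCompl P Q) {v : E} (hv : v ∈ P) :
    splitProj P Q hc v = v :=
  Submodule.projection_apply_of_mem_left hc hv

theorem splitProj_mem {P Q : Submodule ℝ E} (hc : IsCompl P Q) (g : E) :
    splitProj P Q hc g ∈ P :=
  Submodule.projection_apply_mem hc g

theorem splitProj_add_splitProj {P Q : Submodule ℝ E} (hc : IsCompl P Q) (g : E) :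
    splitProj P Q hc g + splitProj Q P hc.symm g = g :=
  Submodule.projection_add_projection_eq_self hc g

theorem mem_cone_of_mem {V : Submodule ℝ E} {α : ℝ} (hα : 0 ≤ α) {v : E} (hv : v ∈ V) :
    v ∈ cone V α := by
  change infDist v (V : Set E) ≤ α * ‖v‖
  rw [infDist_zero_of_mem hv]
  positivity

variable {V L : Submodule ℝ E} (hc : IsCompl V L) {C α : ℝ}

theorem sub_mul_norm_splitProj_le_of_mem_cone
    (hproj : ∀ g : E, C * ‖splitProj L V hc.symm g‖ ≤ infDist g (V : Set E))
    (hα : 0 ≤ α) {g : E} (hg : g ∈ cone V α) :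
    (C - α) * ‖splitProj L V hc.symm g‖ ≤ α * ‖splitProj V L hc g‖ := by
  have hnorm : ‖g‖ ≤ ‖splitProj V L hc g‖ + ‖splitProj L V hc.symm g‖ := by
    conv_lhs => rw [← splitProj_add_splitProj hc g]
    exact norm_add_le _ _
  have hcone : C * ‖splitProj L V hc.symm g‖ ≤ α * ‖g‖ := (hproj g).trans hg
  nlinarith [mul_le_mul_of_nonneg_left hnorm hα]

theorem one_sub_mul_norm_splitProj_le_of_mem_cone
    (hproj : ∀ g : E, C * ‖splitProj L V hc.symm g‖ ≤ infDist g (V : Set E))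
    (hα : 0 ≤ α) (hαC : α < C) {g : E} (hg : g ∈ cone V α) :
    (1 - α / (C - α)) * ‖splitProj V L hc g‖ ≤ ‖g‖ := by
  have hl : ‖splitProj L V hc.symm g‖ ≤ α / (C - α) * ‖splitProj V L hc g‖ := by
    rw [div_mul_eq_mul_div, le_div_iff₀ (sub_pos.2 hαC), mul_comm]
    exact sub_mul_norm_splitProj_le_of_mem_cone hc hproj hα hg
  have hv : ‖splitProj V L hc g‖ ≤ ‖g‖ + ‖splitProj L V hc.symm g‖ := by
    conv_lhs => rw [eq_sub_of_add_eq (splitProj_add_splitProj hc g)]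
    exact norm_sub_le _ _
  linarith

end Projection

theorem stmt14_general [NormedAddCommGroup E] [NormedSpace ℝ E]
    (V L : Submodule ℝ E) (hc : IsCompl V L) (C : ℝ)
    (hproj : ∀ g : E, C * ‖splitProj L V hc.symm g‖ ≤ infDist g (V : Set E))
    (α : ℝ) (hα0 : 0 < α) (hαC : α < C / 2) :
    closedBall 0 1 ∩ (V : Set E) ⊆ splitProj V L hc '' (closedBall 0 1 ∩ cone V α) ∧
    splitProj V L hc '' (closedBall 0 1 ∩ cone V α) ⊆
      closedBall 0 (1 / (1 - α / (C - α))) ∩ (V : Set E) := by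
  constructor
  · rintro v ⟨hv1, hvV⟩
    exact ⟨v, ⟨hv1, mem_cone_of_mem hα0.le hvV⟩, splitProj_of_mem hc hvV⟩
  · rintro _ ⟨g, ⟨hg1, hgc⟩, rfl⟩
    have hc1 : 0 < 1 - α / (C - α) := sub_pos.2 ((div_lt_one (by linarith)).2 (by linarith))
    have hbound := one_sub_mul_norm_splitProj_le_of_mem_cone hc hproj hα0.le (by linarith) hgc
    refine ⟨?_, splitProj_mem hc g⟩
    rw [mem_closedBall_zero_iff, le_div_iff₀ hc1, mul_comm]
    exact hbound.trans (mem_closedBall_zero_iff.1 hg1)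

theorem stmt14 [NormedAddCommGroup E] [NormedSpace ℝ E] [FiniteDimensional ℝ E]
    (V L : Submodule ℝ E) (hc : IsCompl V L) (C : ℝ) (hC : 0 < C)
    (hproj : ∀ g : E, C * ‖splitProj L V hc.symm g‖ ≤ infDist g (V : Set E))
    (α : ℝ) (hα0 : 0 < α) (hαC : α < C / 2) :
    closedBall 0 1 ∩ (V : Set E) ⊆ splitProj V L hc '' (closedBall 0 1 ∩ cone V α) ∧
    splitProj V L hc '' (closedBall 0 1 ∩ cone V α) ⊆
      closedBall 0 (1 / (1 - α / (C - α))) ∩ (V : Set E) :=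
  stmt14_general V L hc C hproj α hα0 hαC
end

section
/- Let E be a finite-dimensional real normed space, let V and L be complementary linear subspaces of E with h := dim V, and suppose C > 0 satisfies C‖P_L g‖ ≤ dist(g, V) for every g ∈ E. Let 0 < α < C/2, set c(α) := α/(C − α) and 𝔠(α) := (1 − c(α))/(1 + c(α)). Suppose Γ ⊆ E is a C_V(α)-set. Then for every x ∈ Γ and every r > 0 one has μH^h(P_V(B̄(x,r) ∩ Γ)) ≥ μH^h( P_V(B̄(x, 𝔠(α)·r) ∩ (x + C_V(α))) ∩ P_V(Γ) ), where x + C_V(α) := {x + w : w ∈ C_V(α)}. -/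
open MeasureTheory Metric Set
open scoped ENNReal Topology

variable {E : Type*}

theorem stmt15 [NormedAddCommGroup E] [NormedSpace ℝ E] [FiniteDimensional ℝ E]
    [MeasurableSpace E] [BorelSpace E]
    (V L : Submodule ℝ E) (hc : IsCompl V L) (h : ℕ) (hdim : Module.finrank ℝ V = h)
    (C : ℝ) (hC : 0 < C)
    (hproj : ∀ g : E, C * ‖splitProj L V hc.symm g‖ ≤ infDist g (V : Set E))
    (α : ℝ) (hα0 : 0 < α) (hαC : α < C / 2)
    (Γ : Set E) (hΓ : IsConeSet V α Γ)
    (x : E) (hx : x ∈ Γ) (r : ℝ) (hr : 0 < r) :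
    μH[(h : ℝ)] (splitProj V L hc ''
        (closedBall x (((1 - α / (C - α)) / (1 + α / (C - α))) * r) ∩ ((x + ·) '' cone V α)) ∩
        splitProj V L hc '' Γ) ≤
      μH[(h : ℝ)] (splitProj V L hc '' (closedBall x r ∩ Γ)) := by
  apply measure_mono
  set c : ℝ := α / (C - α) with hcdef
  have hCα : 0 < C - α := by linarith
  have hc0 : 0 < c := div_pos hα0 hCα
  have hc1 : c < 1 := (div_lt_one hCα).2 (by linarith)
  -- key estimates for cone elements
  have key : ∀ w ∈ cone V α, ‖splitProj L V hc.symm w‖ ≤ c * ‖splitProj V L hc w‖ := by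
    intro w hw
    have h1 : C * ‖splitProj L V hc.symm w‖ ≤ α * ‖w‖ := (hproj w).trans hw
    have hsum : splitProj V L hc w + splitProj L V hc.symm w = w :=
      Submodule.projection_add_projection_eq_self hc w
    have h2 : ‖w‖ ≤ ‖splitProj V L hc w‖ + ‖splitProj L V hc.symm w‖ := by
      calc ‖w‖ = ‖splitProj V L hc w + splitProj L V hc.symm w‖ := by rw [hsum]
        _ ≤ _ := norm_add_le _ _
    have h3 : (C - α) * ‖splitProj L V hc.symm w‖ ≤ α * ‖splitProj V L hc w‖ := by nlinarith
    rw [hcdef, div_mul_eq_mul_div, le_div_iff₀ hCα]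
    nlinarith
  have lower : ∀ w ∈ cone V α, (1 - c) * ‖splitProj V L hc w‖ ≤ ‖w‖ := by
    intro w hw
    have hk := key w hw
    have hsum : splitProj V L hc w + splitProj L V hc.symm w = w :=
      Submodule.projection_add_projection_eq_self hc w
    have h2 : ‖splitProj V L hc w‖ - ‖splitProj L V hc.symm w‖ ≤ ‖w‖ := by
      have := norm_sub_norm_le (splitProj V L hc w + splitProj L V hc.symm w)
        (splitProj L V hc.symm w)
      simp only [add_sub_cancel_right] at this
      calc ‖splitProj V L hc w‖ - ‖splitProj L V hc.symm w‖
          ≤ ‖splitProj V L hc w + splitProj L V hc.symm w‖ := by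
            have h' : ‖splitProj V L hc w‖ ≤
                ‖splitProj V L hc w + splitProj L V hc.symm w‖ + ‖splitProj L V hc.symm w‖ := by
              have := norm_add_le (splitProj V L hc w + splitProj L V hc.symm w)
                (-(splitProj L V hc.symm w))
              simpa using this
            linarith
        _ = ‖w‖ := by rw [hsum]
    nlinarith
  have upper : ∀ w ∈ cone V α, ‖w‖ ≤ (1 + c) * ‖splitProj V L hc w‖ := by
    intro w hw
    have hk := key w hw
    have hsum : splitProj V L hc w + splitProj L V hc.symm w = w :=
      Submodule.projection_add_projection_eq_self hc w
    have h2 : ‖w‖ ≤ ‖splitProj V L hc w‖ + ‖splitProj L V hc.symm w‖ := by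
      calc ‖w‖ = ‖splitProj V L hc w + splitProj L V hc.symm w‖ := by rw [hsum]
        _ ≤ _ := norm_add_le _ _
    nlinarith
  -- linearity of splitProj on differences
  have projsub : ∀ a b : E, splitProj V L hc (a - b) = splitProj V L hc a - splitProj V L hc b := by
    intro a b
    simp [splitProj, map_sub]
  rintro p ⟨⟨z, ⟨hz1, w, hw, hzw⟩, hpz⟩, y, hy, hpy⟩
  refine ⟨y, ⟨?_, hy⟩, hpy⟩
  -- show y ∈ closedBall x r
  have hwy : y - x ∈ cone V α := hΓ x hx y hy
  have hzx : z - x = w := by simp [← hzw]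
  have hwz : z - x ∈ cone V α := hzx ▸ hw
  have heq : splitProj V L hc (y - x) = splitProj V L hc (z - x) := by
    rw [projsub, projsub, hpy, hpz]
  have hzball : ‖z - x‖ ≤ ((1 - c) / (1 + c)) * r := by
    simpa [dist_eq_norm] using hz1
  have h1c : 0 < 1 + c := by linarith
  have h1c' : 0 < 1 - c := by linarith
  have hPz : (1 - c) * ‖splitProj V L hc (z - x)‖ ≤ ‖z - x‖ := lower _ hwz
  have hyu : ‖y - x‖ ≤ (1 + c) * ‖splitProj V L hc (y - x)‖ := upper _ hwy
  rw [mem_closedBall, dist_eq_norm]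
  rw [heq] at hyu
  have : ‖y - x‖ ≤ (1 + c) / (1 - c) * ‖z - x‖ := by
    rw [div_mul_eq_mul_div, le_div_iff₀ h1c']
    nlinarith
  calc ‖y - x‖ ≤ (1 + c) / (1 - c) * ‖z - x‖ := this
    _ ≤ (1 + c) / (1 - c) * (((1 - c) / (1 + c)) * r) := by
        apply mul_le_mul_of_nonneg_left hzball (by positivity)
    _ = r := by field_simp
end

section
/- Let H be a finite-dimensional real inner product space and let V, W ⊆ H be orthogonal linear subspaces (⟨v, w⟩ = 0 for all v ∈ V, w ∈ W). Let A, B be linear subspaces of V and let C, D be linear subspaces of W. Then d_H((A + C) ∩ B̄(0,1), (B + D) ∩ B̄(0,1)) ≤ d_H(A ∩ B̄(0,1), B ∩ B̄(0,1)) + d_H(C ∩ B̄(0,1), D ∩ B̄(0,1)), where A + C := {a + c : a ∈ A, c ∈ C} (and similarly B + D). -/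
/-!
Write `x = a + c` with `a ∈ A`, `c ∈ C`. Since `a ⟂ c`, both `a` and `c` lie in the unit ball,
so there are `b` and `d` in the unit balls of `B` and `D` within the respective Hausdorff
distances. The point `b + d` need not lie in the unit ball, but the orthogonal projection of `x`
onto `B + D` does, and it is at least as close to `x` as `b + d` is.
-/

open Metric Set
open scoped Pointwise RealInnerProductSpace

theorem Metric.exists_dist_le_hausdorffDist {α : Type*} [PseudoMetricSpace α] {s t : Set α}
    {x : α} (hx : x ∈ s) (hs : Bornology.IsBounded s) (ht : IsCompact t) (ht₀ : t.Nonempty) :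
    ∃ y ∈ t, dist x y ≤ hausdorffDist s t := by
  obtain ⟨y, hy, hxy⟩ := ht.exists_infDist_eq_dist ht₀ x
  refine ⟨y, hy, hxy ▸ infDist_le_hausdorffDist_of_mem hx ?_⟩
  exact hausdorffEDist_ne_top_of_nonempty_of_bounded ⟨x, hx⟩ ht₀ hs ht.isBounded

section InnerProductSpace

variable {E : Type*} [NormedAddCommGroup E] [InnerProductSpace ℝ E]

theorem norm_le_norm_add_of_inner_eq_zero {x y : E} (h : ⟪x, y⟫ = 0) :
    ‖x‖ ≤ ‖x + y‖ := by
  rw [mul_self_le_mul_self_iff (norm_nonneg _) (norm_nonneg _),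
    norm_add_sq_eq_norm_sq_add_norm_sq_real h]
  exact le_add_of_nonneg_right (mul_self_nonneg _)

theorem Submodule.exists_mem_inter_closedBall_dist_le (K : Submodule ℝ E)
    [K.HasOrthogonalProjection] {x z : E} {r : ℝ} (hx : x ∈ closedBall 0 r) (hz : z ∈ K) :
    ∃ y ∈ (K : Set E) ∩ closedBall 0 r, dist x y ≤ dist x z := by
  refine ⟨K.starProjection x, ⟨K.starProjection_apply_mem x, ?_⟩, ?_⟩
  · rw [mem_closedBall_zero_iff] at hx ⊢
    exact (K.norm_starProjection_apply_le x).trans hx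
  · rw [dist_eq_norm, dist_eq_norm, starProjection_minimal]
    exact ciInf_le ⟨0, by rintro _ ⟨v, rfl⟩; positivity⟩ (⟨z, hz⟩ : K)

end InnerProductSpace

theorem exists_mem_add_inter_closedBall_dist_le {H : Type*} [NormedAddCommGroup H]
    [InnerProductSpace ℝ H] [FiniteDimensional ℝ H] (A B C D : Submodule ℝ H)
    (hAC : ∀ a ∈ A, ∀ c ∈ C, ⟪a, c⟫ = 0) {x : H}
    (hx : x ∈ ((A : Set H) + (C : Set H)) ∩ closedBall 0 1) :
    ∃ y ∈ ((B : Set H) + (D : Set H)) ∩ closedBall 0 1,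
      dist x y ≤
        hausdorffDist ((A : Set H) ∩ closedBall 0 1) ((B : Set H) ∩ closedBall 0 1) +
          hausdorffDist ((C : Set H) ∩ closedBall 0 1) ((D : Set H) ∩ closedBall 0 1) := by
  rw [mem_inter_iff, mem_add] at hx
  obtain ⟨⟨a, ha, c, hc, rfl⟩, hx⟩ := hx
  have hx' := mem_closedBall_zero_iff.mp hx
  have ha₁ : a ∈ (A : Set H) ∩ closedBall 0 1 := by
    refine ⟨ha, mem_closedBall_zero_iff.mpr <| le_trans ?_ hx'⟩
    exact norm_le_norm_add_of_inner_eq_zero (hAC a ha c hc)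
  have hc₁ : c ∈ (C : Set H) ∩ closedBall 0 1 := by
    refine ⟨hc, mem_closedBall_zero_iff.mpr <| le_trans ?_ hx'⟩
    rw [add_comm]
    exact norm_le_norm_add_of_inner_eq_zero (real_inner_comm a c ▸ hAC a ha c hc)
  have hball (S : Submodule ℝ H) : IsCompact ((S : Set H) ∩ closedBall 0 1) :=
    (isCompact_closedBall 0 1).inter_left S.closed_of_finiteDimensional
  have hball₀ (S : Submodule ℝ H) : ((S : Set H) ∩ closedBall 0 1).Nonempty :=
    ⟨0, S.zero_mem, mem_closedBall_self zero_le_one⟩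
  obtain ⟨b, hb, hab⟩ :=
    exists_dist_le_hausdorffDist ha₁ (hball A).isBounded (hball B) (hball₀ B)
  obtain ⟨d, hd, hcd⟩ :=
    exists_dist_le_hausdorffDist hc₁ (hball C).isBounded (hball D) (hball₀ D)
  rw [← Submodule.coe_sup]
  obtain ⟨y, hy, hxy⟩ :=
    (B ⊔ D).exists_mem_inter_closedBall_dist_le hx (Submodule.add_mem_sup hb.1 hd.1)
  refine ⟨y, hy, ?_⟩
  calc dist (a + c) y ≤ dist (a + c) (b + d) := hxy
    _ ≤ dist a b + dist c d := dist_add_add_le a c b d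
    _ ≤ _ := add_le_add hab hcd

theorem stmt19 {H : Type*} [NormedAddCommGroup H] [InnerProductSpace ℝ H]
    [FiniteDimensional ℝ H]
    (V W : Submodule ℝ H) (horth : ∀ v ∈ V, ∀ w ∈ W, ⟪v, w⟫ = 0)
    (A B : Submodule ℝ H) (hA : A ≤ V) (hB : B ≤ V)
    (C D : Submodule ℝ H) (hC : C ≤ W) (hD : D ≤ W) :
    hausdorffDist (((A : Set H) + (C : Set H)) ∩ closedBall 0 1)
        (((B : Set H) + (D : Set H)) ∩ closedBall 0 1) ≤
      hausdorffDist ((A : Set H) ∩ closedBall 0 1) ((B : Set H) ∩ closedBall 0 1) +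
        hausdorffDist ((C : Set H) ∩ closedBall 0 1) ((D : Set H) ∩ closedBall 0 1) := by
  refine hausdorffDist_le_of_mem_dist (add_nonneg hausdorffDist_nonneg hausdorffDist_nonneg)
    (fun x hx ↦ exists_mem_add_inter_closedBall_dist_le A B C D
      (fun a ha c hc ↦ horth a (hA ha) c (hC hc)) hx) fun x hx ↦ ?_
  rw [hausdorffDist_comm, hausdorffDist_comm (s := (C : Set H) ∩ _)]
  exact exists_mem_add_inter_closedBall_dist_le B A D C
    (fun b hb d hd ↦ horth b (hB hb) d (hD hd)) hx
end
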